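/- arXiv:2211.04599 — 2 statements merged into one kernel-verified Lean document; each statement's English description precedes it below -/
import Mathlib

section
/- For e(ϱ,θ) = (3/2)(θ^{5/2}/ϱ)P(ϱθ^{−3/2}) + aθ⁴/ϱ with P' > 0 and (5/3)P(Z) − Z P'(Z) > 0 for all Z > 0, the specific heat at constant volume ∂e/∂θ (ϱ,θ) is strictly positive for all ϱ>0, θ>0. -/
/-!
Along `Z = ϱ θ^(-3/2)` one has `dZ/dθ = -(3/2) Z/θ`, so the gas part `(3/2) θ^(5/2) P(Z) / ϱ`
has θ-derivative `(9/4) (θ^(3/2)/ϱ) ((5/3) P(Z) - Z P'(Z)) > 0`, while the radiation part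
`a θ⁴/ϱ` contributes `4 a θ³/ϱ > 0`.
-/

theorem hasDerivAt_const_div_rpow (ϱ s : ℝ) {θ : ℝ} (hθ : 0 < θ) :
    HasDerivAt (fun t => ϱ / t ^ s) (-s * (ϱ / θ ^ s) / θ) θ := by
  have hθs : θ ^ s ≠ 0 := (Real.rpow_pos_of_pos hθ s).ne'
  refine ((hasDerivAt_const θ ϱ).fun_div
    (Real.hasDerivAt_rpow_const (p := s) (Or.inl hθ.ne')) hθs).congr_deriv ?_
  rw [Real.rpow_sub_one hθ.ne']
  field_simp
  ring

theorem hasDerivAt_rpow_mul_comp_const_div_rpow {P P' : ℝ → ℝ} {ϱ θ : ℝ} (r s : ℝ)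
    (hθ : 0 < θ) (hP : HasDerivAt P (P' (ϱ / θ ^ s)) (ϱ / θ ^ s)) :
    HasDerivAt (fun t => t ^ r * P (ϱ / t ^ s))
      (θ ^ (r - 1) * (r * P (ϱ / θ ^ s) - s * (ϱ / θ ^ s) * P' (ϱ / θ ^ s))) θ := by
  refine ((Real.hasDerivAt_rpow_const (p := r) (Or.inl hθ.ne')).fun_mul
    (hP.comp θ (hasDerivAt_const_div_rpow ϱ s hθ))).congr_deriv ?_
  rw [Function.comp_apply, Real.rpow_sub_one hθ.ne']
  field_simp
  ring

theorem stmt6_general (a : ℝ) (ha : 0 < a) (P P' : ℝ → ℝ)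
    (hderiv : ∀ Z > (0:ℝ), HasDerivAt P (P' Z) Z)
    (hpos : ∀ Z > (0:ℝ), 0 < 5/3 * P Z - Z * P' Z)
    (ϱ θ : ℝ) (hϱ : 0 < ϱ) (hθ : 0 < θ) :
    ∃ d : ℝ,
      HasDerivAt
        (fun t : ℝ => 3/2 * (t ^ ((5:ℝ)/2) / ϱ) * P (ϱ / t ^ ((3:ℝ)/2)) + a * t^4 / ϱ)
        d θ
      ∧ 0 < d := by
  set Z := ϱ / θ ^ ((3:ℝ)/2)
  have hZ : 0 < Z := div_pos hϱ (Real.rpow_pos_of_pos hθ _)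
  have hgas := (hasDerivAt_rpow_mul_comp_const_div_rpow (5/2) (3/2) hθ
    (hderiv Z hZ)).const_mul (3/2 / ϱ)
  have hradiation := ((hasDerivAt_pow 4 θ).const_mul a).div_const ϱ
  refine ⟨_, (hgas.fun_add hradiation).congr_of_eventuallyEq
    (Filter.Eventually.of_forall fun t => by ring), add_pos ?_ (by positivity)⟩
  have : 0 < 5/2 * P Z - 3/2 * Z * P' Z := by linarith [hpos Z hZ]
  positivity

/-- For `e(ϱ,θ) = (3/2)(θ^(5/2)/ϱ) P(ϱθ^(-3/2)) + aθ⁴/ϱ` with `a > 0`, `P' > 0`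
and `(5/3)P(Z) - Z P'(Z) > 0` for all `Z > 0`, the specific heat at constant
volume `∂e/∂θ (ϱ,θ)` is strictly positive for all `ϱ > 0`, `θ > 0`. -/
theorem stmt6 (a : ℝ) (ha : 0 < a) (P P' : ℝ → ℝ)
    (hderiv : ∀ Z > (0:ℝ), HasDerivAt P (P' Z) Z)
    (hP'pos : ∀ Z > (0:ℝ), 0 < P' Z)
    (hpos : ∀ Z > (0:ℝ), 0 < 5/3 * P Z - Z * P' Z)
    (ϱ θ : ℝ) (hϱ : 0 < ϱ) (hθ : 0 < θ) :
    ∃ d : ℝ,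
      HasDerivAt
        (fun t : ℝ => 3/2 * (t ^ ((5:ℝ)/2) / ϱ) * P (ϱ / t ^ ((3:ℝ)/2)) + a * t^4 / ϱ)
        d θ
      ∧ 0 < d :=
  stmt6_general a ha P P' hderiv hpos ϱ θ hϱ hθ
end

section
/- Cone condition stability: let {O_ε} be a family of compact subsets of a fixed ball B_r(0) ⊂ ℝ³ such that each complement ℝ³ \ O_ε satisfies the uniform α-cone condition with α > 0 independent of ε. Then there is a subsequence ε_n → 0 and a compact set O ⊂ B̄_r(0) such that ℝ³ \ O satisfies the uniform α-cone condition and |(ℝ³ \ O_{ε_n}) Δ (ℝ³ \ O)| → 0 as n → ∞, where Δ denotes symmetric difference restricted to B_r(0). -/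
/-!
Pass to a subsequence whose obstacles converge in the Hausdorff distance to a compact `K`
(closed subsets of a compact set form a compact space), and take `K` as the limit obstacle.

Cone condition: frontier points `wₖ` of the obstacles approach any `x₀ ∈ ∂K`; along a further
subsequence their cone axes converge to some `ξ`. If a point `y` of `K` lay in a cone with axis
`ξ` and vertex `x ∉ K`, then after moving the vertex slightly along the axis, `y` would lie in
the open cones of the nearby obstacles, which miss the obstacles although these come arbitrarily
close to `y`.

Measure: a point outside `K` is eventually outside the obstacles. A point `x ∈ K` that is
infinitely often outside the obstacles is the vertex of cones of their complements; each contains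
a ball of radius proportional to the scale that misses `K`, so `x` is not a Lebesgue density
point of `K`. Hence almost every point of `K` is eventually in the obstacles, and dominated
convergence gives the convergence of the measures of the symmetric differences.
-/

open Set Filter MeasureTheory

/-- The open cone with vertex `x`, aperture `2γ`, height `α` and direction `ξ`. -/
def cone3 (x : EuclideanSpace ℝ (Fin 3)) (γ α : ℝ) (ξ : EuclideanSpace ℝ (Fin 3)) :
    Set (EuclideanSpace ℝ (Fin 3)) :=
  {y | 0 < ‖y - x‖ ∧ ‖y - x‖ ≤ α ∧ Real.cos γ * ‖y - x‖ < (inner ℝ (y - x) ξ : ℝ)}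

/-- `A ⊆ ℝ³` satisfies the uniform `α`-cone condition (with aperture `2γ`). -/
def UniformConeCond (α γ : ℝ) (A : Set (EuclideanSpace ℝ (Fin 3))) : Prop :=
  ∀ x₀ ∈ frontier A, ∃ ξ : EuclideanSpace ℝ (Fin 3), ‖ξ‖ = 1 ∧
    ∀ x ∈ A, ‖x - x₀‖ < α → cone3 x γ α ξ ⊆ A

open Metric Topology TopologicalSpace

section HausdorffLimit

variable {X : Type*} [PseudoMetricSpace X] {ι : Type*} {l : Filter ι} {P : ι → Set X} {K : Set X}

theorem eventually_forall_exists_dist_lt_of_tendsto_hausdorffEDist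
    (hd : Tendsto (fun i => hausdorffEDist (P i) K) l (𝓝 0)) {δ : ℝ} (hδ : 0 < δ) :
    ∀ᶠ i in l, ∀ y ∈ K, ∃ p ∈ P i, dist y p < δ := by
  filter_upwards [(tendsto_order.1 hd).2 _ (ENNReal.ofReal_pos.2 hδ)] with i hi y hy
  obtain ⟨p, hp, hyp⟩ := exists_edist_lt_of_hausdorffEDist_lt hy (hausdorffEDist_comm.trans_lt hi)
  exact ⟨p, hp, edist_lt_ofReal.1 hyp⟩

theorem eventually_notMem_of_tendsto_hausdorffEDist
    (hd : Tendsto (fun i => hausdorffEDist (P i) K) l (𝓝 0)) (hK : IsClosed K) {y : X}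
    (hy : y ∉ K) : ∀ᶠ i in l, y ∉ P i := by
  obtain ⟨δ, hδ, hball⟩ := Metric.isOpen_iff.1 hK.isOpen_compl y hy
  filter_upwards [(tendsto_order.1 hd).2 _ (ENNReal.ofReal_pos.2 hδ)] with i hi hyP
  obtain ⟨z, hz, hyz⟩ := exists_edist_lt_of_hausdorffEDist_lt hyP hi
  exact hball (mem_ball'.2 (edist_lt_ofReal.1 hyz)) hz

end HausdorffLimit

theorem exists_subseq_tendsto_hausdorffEDist {X : Type*} [EMetricSpace X] [CompleteSpace X]
    {A : ℕ → Set X} (hA : ∀ n, IsClosed (A n)) {s : Set X} (hs : IsCompact s)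
    (hAs : ∀ n, A n ⊆ s) :
    ∃ φ : ℕ → ℕ, StrictMono φ ∧ ∃ K : Set X, IsClosed K ∧ K ⊆ s ∧
      Tendsto (fun k => hausdorffEDist (A (φ k)) K) atTop (𝓝 0) := by
  have hcpt : IsCompact {t : Closeds X | (t : Set X) ⊆ s} :=
    isCompact_iff_totallyBounded_isComplete.2
      ⟨Closeds.totallyBounded_subsets_of_totallyBounded hs.totallyBounded,
        (Closeds.isClosed_subsets_of_isClosed hs.isClosed).isComplete⟩
  obtain ⟨K, hKs, φ, hφ, hlim⟩ := hcpt.tendsto_subseq (x := fun n => ⟨A n, hA n⟩) hAs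
  exact ⟨φ, hφ, K, K.isClosed, hKs, tendsto_iff_edist_tendsto_0.1 hlim⟩

theorem IsPreconnected.inter_frontier_nonempty {X : Type*} [TopologicalSpace X] {s t : Set X}
    (ht : IsPreconnected t) (hts : (t ∩ s).Nonempty) (hts' : (t \ s).Nonempty) :
    (t ∩ frontier s).Nonempty := by
  by_contra h
  have notMem_frontier : ∀ z ∈ t, z ∉ closure s ∨ z ∈ interior s := fun z hz => by
    by_contra hz'
    push Not at hz'
    exact h ⟨z, hz, hz'⟩
  obtain ⟨a, hat, has⟩ := hts
  obtain ⟨b, hbt, hbs⟩ := hts'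
  have ha : a ∈ interior s := (notMem_frontier a hat).resolve_left (not_not.2 (subset_closure has))
  have hb : b ∉ closure s :=
    (notMem_frontier b hbt).elim id fun hb => absurd (interior_subset hb) hbs
  obtain ⟨z, -, hzi, hzc⟩ := ht _ _ isOpen_interior isClosed_closure.isOpen_compl
    (fun z hz => (notMem_frontier z hz).symm) ⟨a, hat, ha⟩ ⟨b, hbt, hb⟩
  exact hzc (interior_subset_closure hzi)

theorem eventually_exists_mem_frontier_dist_lt {E : Type*} [NormedAddCommGroup E]
    [NormedSpace ℝ E] {ι : Type*} {l : Filter ι} {P : ι → Set E} {K : Set E}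
    (hd : Tendsto (fun i => hausdorffEDist (P i) K) l (𝓝 0)) (hK : IsClosed K) {x₀ : E}
    (hx₀ : x₀ ∈ frontier K) {δ : ℝ} (hδ : 0 < δ) :
    ∀ᶠ i in l, ∃ w ∈ frontier (P i), dist w x₀ < δ := by
  rw [frontier_eq_closure_inter_closure] at hx₀
  obtain ⟨q, hqK, hq⟩ := Metric.mem_closure_iff.1 hx₀.2 δ hδ
  filter_upwards [eventually_notMem_of_tendsto_hausdorffEDist hd hK hqK,
    eventually_forall_exists_dist_lt_of_tendsto_hausdorffEDist hd hδ] with i hqP hKP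
  obtain ⟨a, ha, hxa⟩ := hKP x₀ (hK.closure_eq ▸ hx₀.1)
  obtain ⟨w, hw, hwP⟩ := (convex_segment a q).isPreconnected.inter_frontier_nonempty
    ⟨a, left_mem_segment ℝ a q, ha⟩ ⟨q, right_mem_segment ℝ a q, hqP⟩
  exact ⟨w, hwP, (convex_ball x₀ δ).segment_subset (mem_ball'.2 hxa) (mem_ball'.2 hq) hw⟩

theorem MeasureTheory.tendsto_measure_symmDiff_of_ae_eventually_mem_iff {Ω : Type*}
    [MeasurableSpace Ω] {μ : Measure Ω} {ι : Type*} {l : Filter ι} [l.IsCountablyGenerated]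
    {A : ι → Set Ω} {B S : Set Ω} (hA : ∀ i, MeasurableSet (A i)) (hB : MeasurableSet B)
    (hS : MeasurableSet S) (hμS : μ S ≠ ⊤) (hAS : ∀ i, A i ⊆ S) (hBS : B ⊆ S)
    (h : ∀ᵐ x ∂μ, ∀ᶠ i in l, x ∈ A i ↔ x ∈ B) :
    Tendsto (fun i => μ (symmDiff (A i) B)) l (𝓝 0) := by
  simpa using tendsto_measure_of_ae_tendsto_indicator l MeasurableSet.empty
    (fun i => (hA i).symmDiff hB) hS hμS
    (Eventually.of_forall fun i => symmDiff_le_sup.trans (sup_le (hAS i) hBS))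
    (h.mono fun x hx => hx.mono fun i hi => by simp [mem_symmDiff, hi])

local notation "ℝ³" => EuclideanSpace ℝ (Fin 3)

def openCone3 (x : ℝ³) (γ α : ℝ) (ξ : ℝ³) : Set ℝ³ :=
  {y | 0 < ‖y - x‖ ∧ ‖y - x‖ < α ∧ Real.cos γ * ‖y - x‖ < (inner ℝ (y - x) ξ : ℝ)}

section Cones

variable {γ α : ℝ} {x y ξ : ℝ³}

theorem openCone3_subset_cone3 : openCone3 x γ α ξ ⊆ cone3 x γ α ξ :=
  fun _ ⟨h0, h1, h2⟩ => ⟨h0, h1.le, h2⟩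

theorem isOpen_setOf_mem_openCone3 :
    IsOpen {q : ℝ³ × ℝ³ × ℝ³ | q.2.2 ∈ openCone3 q.1 γ α q.2.1} := by
  have hcont : Continuous fun q : ℝ³ × ℝ³ × ℝ³ => q.2.2 - q.1 := by fun_prop
  exact (isOpen_lt continuous_const hcont.norm).inter
    ((isOpen_lt hcont.norm continuous_const).inter
      (isOpen_lt (continuous_const.mul hcont.norm) (hcont.inner continuous_snd.fst)))

theorem eventually_nhds_mem_openCone3 {ε : ℝ} (hy : y ∈ openCone3 (x + ε • ξ) γ α ξ) :
    ∀ᶠ q in 𝓝 (ξ, y), q.2 ∈ openCone3 (x + ε • q.1) γ α q.1 :=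
  (isOpen_setOf_mem_openCone3.preimage
    (by fun_prop : Continuous fun q : ℝ³ × ℝ³ => (x + ε • q.1, q.1, q.2))).mem_nhds hy

/-- Pushing the vertex slightly along the axis moves a point of the closed cone into the open
cone, since it strictly decreases the distance to the vertex. -/
theorem eventually_mem_openCone3_add_smul (hγ : 0 ≤ Real.cos γ) (hy : y ∈ cone3 x γ α ξ) :
    ∀ᶠ ε in 𝓝[>] (0 : ℝ), y ∈ openCone3 (x + ε • ξ) γ α ξ := by
  obtain ⟨hpos, hle, hangle⟩ := hy
  set v := y - x
  have hshift : ∀ ε : ℝ, y - (x + ε • ξ) = v - ε • ξ := fun ε => sub_add_eq_sub_sub _ _ _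
  have hcont : Continuous fun ε : ℝ => v - ε • ξ := by fun_prop
  have hpos' : ∀ᶠ ε in 𝓝 (0 : ℝ), 0 < ‖v - ε • ξ‖ :=
    continuousAt_const.eventually_lt hcont.norm.continuousAt (by simpa using hpos)
  have hangle' : ∀ᶠ ε in 𝓝 (0 : ℝ), Real.cos γ * ‖v - ε • ξ‖ < inner ℝ (v - ε • ξ) ξ :=
    (continuousAt_const.mul hcont.norm.continuousAt).eventually_lt
      (hcont.inner continuous_const).continuousAt (by simpa using hangle)
  have hsmall : ∀ᶠ ε in 𝓝 (0 : ℝ), ε * ‖ξ‖ ^ 2 < 2 * inner ℝ v ξ :=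
    (continuous_id.mul continuous_const).continuousAt.eventually_lt continuousAt_const
      (by simpa using (mul_nonneg hγ hpos.le).trans_lt hangle)
  filter_upwards [self_mem_nhdsWithin, nhdsWithin_le_nhds hpos', nhdsWithin_le_nhds hangle',
    nhdsWithin_le_nhds hsmall] with ε (hε : 0 < ε) hpos_ε hangle_ε hsmall_ε
  refine ⟨by rwa [hshift], ?_, by rwa [hshift]⟩
  have hsq : ‖v - ε • ξ‖ ^ 2 < ‖v‖ ^ 2 := by
    rw [norm_sub_sq_real, real_inner_smul_right, norm_smul, Real.norm_of_nonneg hε.le]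
    nlinarith
  rw [hshift]
  exact (lt_of_pow_lt_pow_left₀ 2 (norm_nonneg v) hsq).trans_le hle

theorem add_smul_mem_cone3 (hγ : Real.cos γ < 1) (hξ : ‖ξ‖ = 1) {ε : ℝ} (hε : 0 < ε)
    (hεα : ε ≤ α) : x + ε • ξ ∈ cone3 x γ α ξ := by
  have hnorm : ‖x + ε • ξ - x‖ = ε := by
    rw [add_sub_cancel_left, norm_smul, hξ, Real.norm_of_nonneg hε.le, mul_one]
  refine ⟨hnorm.symm ▸ hε, hnorm.symm ▸ hεα, ?_⟩
  rw [hnorm, add_sub_cancel_left, real_inner_smul_left, real_inner_self_eq_norm_sq, hξ]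
  nlinarith

theorem closedBall_subset_cone3 (hγ₀ : 0 ≤ Real.cos γ) (hγ₁ : Real.cos γ < 1) (hξ : ‖ξ‖ = 1)
    {t : ℝ} (ht : 0 < t) (htα : 2 * t ≤ α) :
    closedBall (x + t • ξ) ((1 - Real.cos γ) * t / 4) ⊆ cone3 x γ α ξ := by
  intro z hz
  set c := Real.cos γ
  set u := z - (x + t • ξ)
  have hu : ‖u‖ ≤ (1 - c) * t / 4 := mem_closedBall_iff_norm.1 hz
  have hdecomp : z - x = u + t • ξ := by simp only [u]; abel
  have htξ : ‖t • ξ‖ = t := by rw [norm_smul, hξ, Real.norm_of_nonneg ht.le, mul_one]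
  have hupper : ‖z - x‖ ≤ ‖u‖ + t := by
    simpa only [hdecomp, htξ] using norm_add_le u (t • ξ)
  have hlower : t - ‖u‖ ≤ ‖z - x‖ := by
    have := norm_sub_norm_le (t • ξ) (-u)
    rw [htξ, norm_neg, sub_neg_eq_add, add_comm] at this
    rw [hdecomp]; linarith
  have hinner : t - ‖u‖ ≤ inner ℝ (z - x) ξ := by
    rw [hdecomp, inner_add_left, real_inner_smul_left, real_inner_self_eq_norm_sq, hξ]
    have := abs_le.1 ((abs_real_inner_le_norm u ξ).trans_eq (by rw [hξ, mul_one]))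
    linarith
  have hu' : ‖u‖ < t / 2 := hu.trans_lt (by nlinarith)
  refine ⟨by linarith, by linarith, ?_⟩
  calc c * ‖z - x‖ ≤ c * (‖u‖ + t) := mul_le_mul_of_nonneg_left hupper hγ₀
    _ < t - ‖u‖ := by nlinarith
    _ ≤ _ := hinner

end Cones

section ConeCondition

variable {γ α : ℝ}

theorem UniformConeCond.exists_cone3_subset {A : Set ℝ³} (hA : UniformConeCond α γ A)
    {x b : ℝ³} (hx : x ∈ A) (hb : b ∉ A) (hxb : dist x b < α) :
    ∃ ξ : ℝ³, ‖ξ‖ = 1 ∧ cone3 x γ α ξ ⊆ A := by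
  obtain ⟨w, hw, hwA⟩ := (convex_segment x b).isPreconnected.inter_frontier_nonempty
    ⟨x, left_mem_segment ℝ x b, hx⟩ ⟨b, right_mem_segment ℝ x b, hb⟩
  obtain ⟨ξ, hξ, hcone⟩ := hA w hwA
  refine ⟨ξ, hξ, hcone x hx ?_⟩
  rw [norm_sub_rev]
  exact (norm_sub_le_of_mem_segment hw).trans_lt (by rwa [← dist_eq_norm, dist_comm])

/-- For a cone axis `ξ` of `Pᶜ` at `x`, the ball of radius `s = (1 - cos γ) ρ / 16` about
`x + (ρ / 2) ξ` lies in `closedBall x ρ` at distance `s` from `P`, hence misses `K`; its share of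
the volume of `closedBall x ρ` is the constant below. -/
theorem volume_inter_closedBall_le_of_uniformConeCond (hγ₀ : 0 ≤ Real.cos γ)
    (hγ₁ : Real.cos γ < 1) {P K : Set ℝ³} (hP : UniformConeCond α γ Pᶜ) {x : ℝ³} (hxK : x ∈ K)
    (hxP : x ∉ P) {ρ : ℝ} (hρ : 0 < ρ) (hρα : ρ < α)
    (hKP : ∀ y ∈ K, ∃ p ∈ P, dist y p < (1 - Real.cos γ) * ρ / 16) :
    volume (K ∩ closedBall x ρ) ≤
      (1 - ENNReal.ofReal (((1 - Real.cos γ) / 16) ^ 3)) * volume (closedBall x ρ) := by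
  set c := Real.cos γ
  set s := (1 - c) * ρ / 16
  have hs : 0 < s := by unfold s; nlinarith
  have hsρ : s ≤ ρ / 16 := by unfold s; nlinarith
  obtain ⟨a, ha, hxa⟩ := hKP x hxK
  obtain ⟨ξ, hξ, hcone⟩ := hP.exists_cone3_subset hxP (not_not.2 ha) (by linarith)
  set z := x + (ρ / 2) • ξ
  have hfree : closedBall z (2 * s) ⊆ Pᶜ := by
    have := closedBall_subset_cone3 (x := x) hγ₀ hγ₁ hξ (half_pos hρ)
      (by linarith : 2 * (ρ / 2) ≤ α)
    rw [show (1 - c) * (ρ / 2) / 4 = 2 * s by unfold s; ring] at this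
    exact this.trans hcone
  have hdisj : Disjoint (K ∩ closedBall x ρ) (closedBall z s) := by
    refine Set.disjoint_left.2 fun y hy hyz => ?_
    obtain ⟨p, hp, hyp⟩ := hKP y hy.1
    refine hfree (mem_closedBall.2 ?_) hp
    linarith [dist_triangle p y z, dist_comm y p, mem_closedBall.1 hyz]
  have hsub : K ∩ closedBall x ρ ∪ closedBall z s ⊆ closedBall x ρ := by
    refine union_subset inter_subset_right fun y hy => mem_closedBall.2 ?_
    have hzx : dist z x = ρ / 2 := by
      rw [dist_eq_norm, add_sub_cancel_left, norm_smul, hξ,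
        Real.norm_of_nonneg (half_pos hρ).le, mul_one]
    linarith [dist_triangle y z x, mem_closedBall.1 hy]
  have hvol : volume (closedBall z s) =
      ENNReal.ofReal (((1 - c) / 16) ^ 3) * volume (closedBall x ρ) := by
    rw [Measure.addHaar_closedBall _ _ hs.le, Measure.addHaar_closedBall _ _ hρ.le,
      finrank_euclideanSpace_fin, ← mul_assoc, ← ENNReal.ofReal_mul (by positivity)]
    congr 2
    unfold s; ring
  have hle :
      volume (K ∩ closedBall x ρ) + volume (closedBall z s) ≤ volume (closedBall x ρ) := by
    rw [← measure_union hdisj measurableSet_closedBall]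
    exact measure_mono hsub
  rw [ENNReal.sub_mul fun _ _ => measure_closedBall_lt_top.ne, one_mul, ← hvol]
  exact ENNReal.le_sub_of_add_le_right (measure_closedBall_lt_top.ne) hle

end ConeCondition

section Limit

variable {γ α : ℝ} {ι : Type*} {l : Filter ι} {P : ι → Set ℝ³} {K : Set ℝ³}

theorem ae_eventually_mem_of_tendsto_hausdorffEDist (hα : 0 < α) (hγ₀ : 0 ≤ Real.cos γ)
    (hγ₁ : Real.cos γ < 1) (hP : ∀ i, UniformConeCond α γ (P i)ᶜ) (hK : IsClosed K)
    (hd : Tendsto (fun i => hausdorffEDist (P i) K) l (𝓝 0)) :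
    ∀ᵐ x, x ∈ K → ∀ᶠ i in l, x ∈ P i := by
  set θ := ENNReal.ofReal (((1 - Real.cos γ) / 16) ^ 3)
  have hc : 0 < 1 - Real.cos γ := by linarith
  have hθ : 0 < θ := ENNReal.ofReal_pos.2 (by positivity)
  filter_upwards [Besicovitch.ae_tendsto_measure_inter_div_of_measurableSet volume
    hK.measurableSet] with x hx hxK
  rw [indicator_of_mem hxK, Pi.one_apply] at hx
  by_contra hnot
  obtain ⟨ρ, hρ, hρα⟩ := ((hx.eventually (lt_mem_nhds (ENNReal.sub_lt_self ENNReal.one_ne_top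
    one_ne_zero hθ.ne'))).and (Ioo_mem_nhdsGT hα)).exists
  obtain ⟨i, hxi, hKi⟩ := ((not_eventually.1 hnot).and_eventually
    (eventually_forall_exists_dist_lt_of_tendsto_hausdorffEDist hd
      (by nlinarith [hρα.1] : 0 < (1 - Real.cos γ) * ρ / 16))).exists
  exact hρ.not_ge (ENNReal.div_le_of_le_mul (volume_inter_closedBall_le_of_uniformConeCond
    hγ₀ hγ₁ (hP i) hxK hxi hρα.1 hρα.2 hKi))

/-- `UniformConeCond α γ A` says that every frontier point of `A` has a cone direction. -/
def IsConeDirection (α γ : ℝ) (A : Set ℝ³) (x₀ ξ : ℝ³) : Prop :=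
  ‖ξ‖ = 1 ∧ ∀ x ∈ A, ‖x - x₀‖ < α → cone3 x γ α ξ ⊆ A

theorem IsConeDirection.of_tendsto [l.NeBot] (hγ₀ : 0 ≤ Real.cos γ) (hγ₁ : Real.cos γ < 1)
    (hK : IsClosed K) (hd : Tendsto (fun i => hausdorffEDist (P i) K) l (𝓝 0))
    {w ξs : ι → ℝ³} {x₀ ξ : ℝ³} (hw : Tendsto w l (𝓝 x₀)) (hξs : Tendsto ξs l (𝓝 ξ))
    (hdir : ∀ i, IsConeDirection α γ (P i)ᶜ (w i) (ξs i)) : IsConeDirection α γ Kᶜ x₀ ξ := by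
  refine ⟨tendsto_nhds_unique hξs.norm ?_, fun x hx hxx₀ y hy hyK => ?_⟩
  · simp [fun i => (hdir i).1]
  obtain ⟨ε, hyε, hε, hεα⟩ := ((eventually_mem_openCone3_add_smul hγ₀ hy).and
    (Ioo_mem_nhdsGT (sub_pos.2 hxx₀))).exists
  have hnear := eventually_nhds_mem_openCone3 hyε
  rw [nhds_prod_eq] at hnear
  obtain ⟨pU, hU, pV, hV, hUV⟩ := eventually_prod_iff.1 hnear
  obtain ⟨η, hη, hVη⟩ := Metric.eventually_nhds_iff.1 hV
  obtain ⟨i, hξi, hKi, hxi, hwi⟩ := ((hξs.eventually hU).and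
    ((eventually_forall_exists_dist_lt_of_tendsto_hausdorffEDist hd hη).and
    ((eventually_notMem_of_tendsto_hausdorffEDist hd hK hx).and
    (Metric.tendsto_nhds.1 hw _ (by linarith : 0 < α - ‖x - x₀‖ - ε))))).exists
  obtain ⟨a, ha, hya⟩ := hKi y hyK
  have hxw : ‖x - w i‖ + ε < α := by
    linarith [norm_sub_le_norm_sub_add_norm_sub x x₀ (w i), dist_eq_norm' (w i) x₀]
  have hvertex : x + ε • ξs i ∈ (P i)ᶜ :=
    (hdir i).2 x hxi (by linarith)
      (add_smul_mem_cone3 hγ₁ (hdir i).1 hε (by linarith [norm_nonneg (x - x₀)]))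
  have hvertex_near : ‖x + ε • ξs i - w i‖ < α := by
    calc ‖x + ε • ξs i - w i‖ = ‖(x - w i) + ε • ξs i‖ := by rw [add_sub_right_comm]
      _ ≤ ‖x - w i‖ + ε := by
        simpa [norm_smul, (hdir i).1, abs_of_pos hε] using norm_add_le (x - w i) (ε • ξs i)
      _ < α := hxw
  exact (hdir i).2 _ hvertex hvertex_near
    (openCone3_subset_cone3 (hUV hξi (hVη (by rwa [dist_comm])))) ha

theorem UniformConeCond.of_tendsto_hausdorffEDist (hγ₀ : 0 ≤ Real.cos γ)
    (hγ₁ : Real.cos γ < 1) {P : ℕ → Set ℝ³} (hP : ∀ k, UniformConeCond α γ (P k)ᶜ)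
    (hK : IsClosed K) (hd : Tendsto (fun k => hausdorffEDist (P k) K) atTop (𝓝 0)) :
    UniformConeCond α γ Kᶜ := by
  intro x₀ hx₀
  rw [frontier_compl] at hx₀
  obtain ⟨φ, hφ, hφw⟩ := extraction_forall_of_eventually fun n : ℕ =>
    eventually_exists_mem_frontier_dist_lt hd hK hx₀ (Nat.one_div_pos_of_nat (n := n))
  choose w hwP hwx₀ using hφw
  choose ξs hξs using fun n => hP (φ n) (w n) (by rw [frontier_compl]; exact hwP n)
  obtain ⟨ξ, -, ψ, hψ, hξ⟩ := (isCompact_sphere (0 : ℝ³) 1).tendsto_subseq (x := ξs)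
    fun n => by simpa using (hξs n).1
  have hw : Tendsto w atTop (𝓝 x₀) := tendsto_iff_dist_tendsto_zero.2 <|
    squeeze_zero (fun _ => dist_nonneg) (fun n => (hwx₀ n).le)
      tendsto_one_div_add_atTop_nhds_zero_nat
  exact ⟨ξ, IsConeDirection.of_tendsto hγ₀ hγ₁ hK (hd.comp (hφ.comp hψ).tendsto_atTop)
    (hw.comp hψ.tendsto_atTop) hξ fun n => hξs (ψ n)⟩

end Limit

theorem stmt14_general (r α γ : ℝ) (hα : 0 < α)
    (hγ : γ ∈ Set.Ioo 0 (Real.pi/2))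
    (O : ℝ → Set (EuclideanSpace ℝ (Fin 3)))
    (hcomp : ∀ ε ∈ Set.Ioo (0:ℝ) 1, IsCompact (O ε))
    (hsub : ∀ ε ∈ Set.Ioo (0:ℝ) 1, O ε ⊆ Metric.ball 0 r)
    (hcone : ∀ ε ∈ Set.Ioo (0:ℝ) 1, UniformConeCond α γ (O ε)ᶜ) :
    ∃ (εn : ℕ → ℝ) (Olim : Set (EuclideanSpace ℝ (Fin 3))),
      (∀ n, εn n ∈ Set.Ioo (0:ℝ) 1) ∧
      Filter.Tendsto εn Filter.atTop (nhds 0) ∧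
      IsCompact Olim ∧ Olim ⊆ Metric.closedBall 0 r ∧
      UniformConeCond α γ Olimᶜ ∧
      Filter.Tendsto (fun n => volume (symmDiff (O (εn n)) Olim))
        Filter.atTop (nhds 0) := by
  have hcos₀ : 0 ≤ Real.cos γ :=
    Real.cos_nonneg_of_mem_Icc ⟨by linarith [hγ.1, Real.pi_pos], hγ.2.le⟩
  have hcos₁ : Real.cos γ < 1 :=
    Real.cos_zero ▸ Real.cos_lt_cos_of_nonneg_of_le_pi_div_two le_rfl hγ.2.le hγ.1
  set e : ℕ → ℝ := fun n => 1 / ((n : ℝ) + 2)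
  have he : ∀ n, e n ∈ Ioo (0 : ℝ) 1 := fun n =>
    ⟨by positivity, (div_lt_one (by positivity)).2 (by linarith [n.cast_nonneg (α := ℝ)])⟩
  have he0 : Tendsto e atTop (𝓝 0) := tendsto_const_nhds.div_atTop
    (tendsto_atTop_add_const_right _ 2 tendsto_natCast_atTop_atTop)
  have hsubr : ∀ n, O (e n) ⊆ closedBall 0 r := fun n =>
    (hsub _ (he n)).trans ball_subset_closedBall
  obtain ⟨φ, hφ, K, hK, hKr, hd⟩ := exists_subseq_tendsto_hausdorffEDist
    (fun n => (hcomp _ (he n)).isClosed) (isCompact_closedBall 0 r) hsubr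
  have hP : ∀ k, UniformConeCond α γ (O (e (φ k)))ᶜ := fun k => hcone _ (he (φ k))
  refine ⟨e ∘ φ, K, fun k => he (φ k),
    he0.comp hφ.tendsto_atTop,
    (isCompact_closedBall 0 r).of_isClosed_subset hK hKr, hKr,
    UniformConeCond.of_tendsto_hausdorffEDist hcos₀ hcos₁ hP hK hd, ?_⟩
  refine tendsto_measure_symmDiff_of_ae_eventually_mem_iff
    (fun k => (hcomp _ (he (φ k))).isClosed.measurableSet) hK.measurableSet
    measurableSet_closedBall measure_closedBall_lt_top.ne (fun k => hsubr (φ k)) hKr ?_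
  filter_upwards [ae_eventually_mem_of_tendsto_hausdorffEDist hα hcos₀ hcos₁ hP hK hd] with x hx
  by_cases hxK : x ∈ K
  · exact (hx hxK).mono fun k hk => iff_of_true hk hxK
  · exact (eventually_notMem_of_tendsto_hausdorffEDist hd hK hxK).mono
      fun k hk => iff_of_false hk hxK

/-- Cone condition stability: given compact obstacles `O_ε ⊆ B_r(0)` whose
complements satisfy the uniform `α`-cone condition, there is a subsequence
`ε_n → 0` and a compact `O ⊆ B̄_r(0)` whose complement satisfies the uniform
`α`-cone condition such that the measure of the symmetric difference of the
complements (equivalently, of the sets) tends to `0`. -/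
theorem stmt14 (r α γ : ℝ) (hr : 0 < r) (hα : 0 < α)
    (hγ : γ ∈ Set.Ioo 0 (Real.pi/2))
    (O : ℝ → Set (EuclideanSpace ℝ (Fin 3)))
    (hcomp : ∀ ε ∈ Set.Ioo (0:ℝ) 1, IsCompact (O ε))
    (hsub : ∀ ε ∈ Set.Ioo (0:ℝ) 1, O ε ⊆ Metric.ball 0 r)
    (hcone : ∀ ε ∈ Set.Ioo (0:ℝ) 1, UniformConeCond α γ (O ε)ᶜ) :
    ∃ (εn : ℕ → ℝ) (Olim : Set (EuclideanSpace ℝ (Fin 3))),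
      (∀ n, εn n ∈ Set.Ioo (0:ℝ) 1) ∧
      Filter.Tendsto εn Filter.atTop (nhds 0) ∧
      IsCompact Olim ∧ Olim ⊆ Metric.closedBall 0 r ∧
      UniformConeCond α γ Olimᶜ ∧
      Filter.Tendsto (fun n => volume (symmDiff (O (εn n)) Olim))
        Filter.atTop (nhds 0) :=
  stmt14_general r α γ hα hγ O hcomp hsub hcone
end
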